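/- arXiv:1309.6613 — 6 statements merged into one kernel-verified Lean document; each statement's English description precedes it below -/
import Mathlib

section
/- Along any solution of the dual-decomposition dynamics, the curves z and μ are twice differentiable and the Lyapunov function V(t) = (1/2)‖ż(t)‖² + (1/2)‖μ̇(t)‖² is differentiable with derivative V'(t) = -k_G · f''(z(t))(ż(t), ż(t)) ≤ 0 for every t ∈ ℝ; in particular, V is antitone (monotonically nonincreasing) on ℝ. -/
/-!
Differentiating the dynamics gives `z̈ = -k_G f''(z) ż - k_I D μ̇` and `μ̈ = k_I Dᵀ ż`, so
`V' = ⟨ż, z̈⟩ + ⟨μ̇, μ̈⟩ = -k_G f''(z)(ż, ż)`: the coupling terms cancel because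
`⟨ż, D μ̇⟩ = ⟨μ̇, Dᵀ ż⟩`. Convexity makes `f''(z)` positive semidefinite, so `V' ≤ 0`.
-/

open Matrix

lemma hasDerivAt_pi₂ {α β : Type*} [Fintype β] {u : ℝ → α → β → ℝ} {u' : α → β → ℝ} {t : ℝ} :
    HasDerivAt u u' t ↔ ∀ i k, HasDerivAt (fun s => u s i k) (u' i k) t := by
  simp only [hasDerivAt_pi]

lemma HasDerivAt.matrix_mul_apply {α β γ : Type*} [Fintype β] [Fintype γ] (D : Matrix α γ ℝ)
    {w : ℝ → γ → β → ℝ} {w' : γ → β → ℝ} {t : ℝ} (h : HasDerivAt w w' t) (i : α) (k : β) :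
    HasDerivAt (fun s => ∑ e, D i e * w s e k) (∑ e, D i e * w' e k) t :=
  HasDerivAt.fun_sum fun e _ => (hasDerivAt_pi₂.mp h e k).const_mul _

section Pairing

variable {α β γ : Type*} [Fintype α] [Fintype β] [Fintype γ]

def pairing (u v : α → β → ℝ) : ℝ := ∑ i, ∑ k, u i k * v i k

lemma pairing_single_right [DecidableEq α] [DecidableEq β] (u : α → β → ℝ) (i : α) (k : β) :
    pairing u (Pi.single i (Pi.single k 1)) = u i k := by
  simp [pairing, Pi.single_apply, ite_apply]

lemma pairing_apply_single [DecidableEq α] [DecidableEq β] {M : Type*}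
    [FunLike M (α → β → ℝ) ℝ] [LinearMapClass M ℝ (α → β → ℝ) ℝ] (L : M) (u : α → β → ℝ) :
    pairing u (fun i k => L (Pi.single i (Pi.single k 1))) = L u := by
  have hu : u = ∑ i, ∑ k, u i k • (Pi.single i (Pi.single k 1) : α → β → ℝ) := by
    ext i k
    simp [Finset.sum_apply, Pi.single_apply, ite_apply]
  conv_rhs => rw [hu]
  simp only [map_sum, map_smul, smul_eq_mul, pairing]

lemma eq_apply_single_of_forall_eq_pairing [DecidableEq α] [DecidableEq β] {M : Type*}
    [FunLike M (α → β → ℝ) ℝ] {L : M} {g : α → β → ℝ} (h : ∀ u, L u = pairing g u) :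
    g = fun i k => L (Pi.single i (Pi.single k 1)) := by
  ext i k
  rw [h, pairing_single_right]

lemma pairing_matrix_mul_right (D : Matrix α γ ℝ) (u : α → β → ℝ) (w : γ → β → ℝ) :
    pairing u (fun i k => ∑ e, D i e * w e k) = pairing w (fun e k => ∑ i, D i e * u i k) := by
  simp only [pairing, Finset.mul_sum]
  rw [Finset.sum_comm]
  conv_rhs => rw [Finset.sum_comm]
  refine Finset.sum_congr rfl fun k _ => ?_
  rw [Finset.sum_comm]
  exact Finset.sum_congr rfl fun e _ => Finset.sum_congr rfl fun i _ => by ring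

lemma pairing_skew_coupling_cancel (D : Matrix α γ ℝ) (a c : ℝ) (u g : α → β → ℝ)
    (w : γ → β → ℝ) :
    pairing u (fun i k => a * g i k - c * ∑ e, D i e * w e k)
      + pairing w (fun e k => c * ∑ i, D i e * u i k) = a * pairing u g := by
  have hadj := pairing_matrix_mul_right D u w
  simp only [pairing, mul_sub, Finset.sum_sub_distrib, mul_left_comm _ c, mul_left_comm _ a,
    ← Finset.mul_sum] at hadj ⊢
  rw [hadj]
  ring

lemma HasDerivAt.half_pairing_self {u : ℝ → α → β → ℝ} {u' : α → β → ℝ} {t : ℝ}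
    (h : HasDerivAt u u' t) :
    HasDerivAt (fun s => 1 / 2 * pairing (u s) (u s)) (pairing (u t) u') t := by
  have hc := hasDerivAt_pi₂.mp h
  have hsum : HasDerivAt (fun s => 1 / 2 * pairing (u s) (u s))
      (1 / 2 * ∑ i, ∑ k, (u' i k * u t i k + u t i k * u' i k)) t :=
    (HasDerivAt.fun_sum fun i _ => HasDerivAt.fun_sum fun k _ =>
      (hc i k).fun_mul (hc i k)).const_mul (1 / 2 : ℝ)
  refine hsum.congr_deriv ?_
  simp only [pairing, Finset.mul_sum]
  exact Finset.sum_congr rfl fun i _ => Finset.sum_congr rfl fun k _ => by ring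

end Pairing

section SecondDerivative

variable {F : Type*} [NormedAddCommGroup F] [NormedSpace ℝ F] {f : F → ℝ}

lemma HasDerivAt.fderiv_apply_comp {z : ℝ → F} {z' : F} {t : ℝ}
    (hf : DifferentiableAt ℝ (fderiv ℝ f) (z t)) (hz : HasDerivAt z z' t) (w : F) :
    HasDerivAt (fun s => fderiv ℝ f (z s) w) (fderiv ℝ (fderiv ℝ f) (z t) z' w) t := by
  simpa using (hf.hasFDerivAt.comp_hasDerivAt t hz).clm_apply (hasDerivAt_const t w)

/-- Along the line `s ↦ x + s • u` the convex function has monotone slope `f'(x + s • u) u`,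
whose derivative at `0` is `f''(x)(u, u)`. -/
lemma ConvexOn.iteratedFDeriv_two_nonneg (hconv : ConvexOn ℝ Set.univ f) (hf : ContDiff ℝ 2 f)
    (x u : F) : 0 ≤ iteratedFDeriv ℝ 2 f x ![u, u] := by
  have hf₁ : Differentiable ℝ f := hf.differentiable (by norm_num)
  have hf₂ : Differentiable ℝ (fderiv ℝ f) :=
    (hf.fderiv_right (m := 1) (by norm_num)).differentiable one_ne_zero
  have hline : ∀ s : ℝ, HasDerivAt (fun s : ℝ => x + s • u) u s := fun s => by
    simpa using ((hasDerivAt_id s).smul_const u).const_add x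
  have hderiv : ∀ s, HasDerivAt (fun s => f (x + s • u)) (fderiv ℝ f (x + s • u) u) s :=
    fun s => (hf₁ _).hasFDerivAt.comp_hasDerivAt s (hline s)
  have hconv_line : ConvexOn ℝ Set.univ (fun s : ℝ => f (x + s • u)) := by
    have h := hconv.comp_affineMap
      ((LinearMap.id.smulRight u).toAffineMap + AffineMap.const ℝ ℝ x)
    simpa [Function.comp_def, add_comm] using h
  have hmono : Monotone (fun s : ℝ => fderiv ℝ f (x + s • u) u) := by
    have hmono_deriv := hconv_line.monotoneOn_deriv fun s _ => (hderiv s).differentiableAt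
    rwa [monotoneOn_univ, funext fun s => (hderiv s).deriv] at hmono_deriv
  have h0 := HasDerivAt.fderiv_apply_comp (hf₂ _) (hline 0) u
  rw [iteratedFDeriv_two_apply]
  simpa using h0.nonneg_of_monotone hmono

end SecondDerivative

theorem dual_decomposition_lyapunov_derivative_general
    {V E : Type*} [Fintype V] [Fintype E]
    (D : Matrix V E ℝ)
    (n : ℕ)
    (f : (V → Fin n → ℝ) → ℝ)
    (hconv : ConvexOn ℝ Set.univ f) (hf : ContDiff ℝ 2 f)
    (gradf : (V → Fin n → ℝ) → (V → Fin n → ℝ))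
    (hgrad : ∀ x u, fderiv ℝ f x u = ∑ i, ∑ k, gradf x i k * u i k)
    (kG kI : ℝ) (hkG : 0 < kG)
    (z : ℝ → (V → Fin n → ℝ)) (μ : ℝ → (E → Fin n → ℝ))
    (hz : Differentiable ℝ z) (hμ : Differentiable ℝ μ)
    (hzdyn : ∀ t, deriv z t = fun i k =>
      -kG * gradf (z t) i k - kI * ∑ e, D i e * μ t e k)
    (hμdyn : ∀ t, deriv μ t = fun e k => kI * ∑ i, D i e * z t i k) :
    Differentiable ℝ (deriv z) ∧ Differentiable ℝ (deriv μ) ∧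
    (∀ t, HasDerivAt
      (fun s => (1 / 2) * (∑ i, ∑ k, deriv z s i k * deriv z s i k)
        + (1 / 2) * (∑ e, ∑ k, deriv μ s e k * deriv μ s e k))
      (-(kG * iteratedFDeriv ℝ 2 f (z t) ![deriv z t, deriv z t])) t) ∧
    (∀ t, -(kG * iteratedFDeriv ℝ 2 f (z t) ![deriv z t, deriv z t]) ≤ 0) ∧
    Antitone (fun s => (1 / 2) * (∑ i, ∑ k, deriv z s i k * deriv z s i k)
        + (1 / 2) * (∑ e, ∑ k, deriv μ s e k * deriv μ s e k)) := by
  classical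
  have hf₂ : Differentiable ℝ (fderiv ℝ f) :=
    (hf.fderiv_right (m := 1) (by norm_num)).differentiable one_ne_zero
  have hgradf : ∀ x, gradf x = fun i k => fderiv ℝ f x (Pi.single i (Pi.single k 1)) :=
    fun x => eq_apply_single_of_forall_eq_pairing (hgrad x)
  have hz₂ : ∀ t, HasDerivAt (deriv z) (fun i k =>
      -kG * fderiv ℝ (fderiv ℝ f) (z t) (deriv z t) (Pi.single i (Pi.single k 1))
        - kI * ∑ e, D i e * deriv μ t e k) t := fun t =>
    (hasDerivAt_pi₂.mpr fun i k =>
      ((HasDerivAt.fderiv_apply_comp (hf₂ _) (hz t).hasDerivAt _).const_mul _).fun_sub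
        (((hμ t).hasDerivAt.matrix_mul_apply D i k).const_mul _)).congr_of_eventuallyEq
      (.of_forall fun s => by rw [hzdyn, hgradf])
  have hμ₂ : ∀ t, HasDerivAt (deriv μ) (fun e k => kI * ∑ i, D i e * deriv z t i k) t :=
    fun t => (hasDerivAt_pi₂.mpr fun e k =>
      (((hz t).hasDerivAt.matrix_mul_apply Dᵀ e k).const_mul _)).congr_of_eventuallyEq
      (.of_forall hμdyn)
  have hV : ∀ t, HasDerivAt
      (fun s => 1 / 2 * pairing (deriv z s) (deriv z s) + 1 / 2 * pairing (deriv μ s) (deriv μ s))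
      (-(kG * iteratedFDeriv ℝ 2 f (z t) ![deriv z t, deriv z t])) t := fun t =>
    ((hz₂ t).half_pairing_self.add (hμ₂ t).half_pairing_self).congr_deriv (by
      rw [pairing_skew_coupling_cancel, pairing_apply_single, iteratedFDeriv_two_apply]
      simp)
  have hV_nonpos : ∀ t, -(kG * iteratedFDeriv ℝ 2 f (z t) ![deriv z t, deriv z t]) ≤ 0 := fun t =>
    neg_nonpos.mpr (mul_nonneg hkG.le (hconv.iteratedFDeriv_two_nonneg hf _ _))
  exact ⟨fun t => (hz₂ t).differentiableAt, fun t => (hμ₂ t).differentiableAt, hV, hV_nonpos,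
    antitone_of_hasDerivAt_nonpos hV hV_nonpos⟩

/-- Along any solution of the dual-decomposition dynamics
`ż = -k_G ∇f(z) - k_I' (D μ)`, `μ̇ = k_I' (Dᵀ z)`, the curves `z` and `μ` are twice
differentiable and the Lyapunov function `V(t) = ½‖ż(t)‖² + ½‖μ̇(t)‖²` is differentiable
with `V'(t) = -k_G · f''(z(t))(ż(t), ż(t)) ≤ 0` for all `t`; hence `V` is antitone. -/
theorem dual_decomposition_lyapunov_derivative
    {V E : Type*} [Fintype V] [Fintype E] [Nonempty V] [Nonempty E] [DecidableEq V]
    (G : SimpleGraph V) [DecidableRel G.Adj] (hG : G.Connected)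
    (D : Matrix V E ℝ) (hD : D * Dᵀ = G.lapMatrix ℝ)
    (n : ℕ) (hn : 1 ≤ n)
    (f : (V → Fin n → ℝ) → ℝ)
    (hconv : ConvexOn ℝ Set.univ f) (hf : ContDiff ℝ 2 f)
    (gradf : (V → Fin n → ℝ) → (V → Fin n → ℝ))
    (hgrad : ∀ x u, fderiv ℝ f x u = ∑ i, ∑ k, gradf x i k * u i k)
    (kG kI : ℝ) (hkG : 0 < kG) (hkI : 0 < kI)
    (z : ℝ → (V → Fin n → ℝ)) (μ : ℝ → (E → Fin n → ℝ))
    (hz : Differentiable ℝ z) (hμ : Differentiable ℝ μ)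
    (hzdyn : ∀ t, deriv z t = fun i k =>
      -kG * gradf (z t) i k - kI * ∑ e, D i e * μ t e k)
    (hμdyn : ∀ t, deriv μ t = fun e k => kI * ∑ i, D i e * z t i k) :
    Differentiable ℝ (deriv z) ∧ Differentiable ℝ (deriv μ) ∧
    (∀ t, HasDerivAt
      (fun s => (1 / 2) * (∑ i, ∑ k, deriv z s i k * deriv z s i k)
        + (1 / 2) * (∑ e, ∑ k, deriv μ s e k * deriv μ s e k))
      (-(kG * iteratedFDeriv ℝ 2 f (z t) ![deriv z t, deriv z t])) t) ∧
    (∀ t, -(kG * iteratedFDeriv ℝ 2 f (z t) ![deriv z t, deriv z t]) ≤ 0) ∧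
    Antitone (fun s => (1 / 2) * (∑ i, ∑ k, deriv z s i k * deriv z s i k)
        + (1 / 2) * (∑ e, ∑ k, deriv μ s e k * deriv μ s e k)) :=
  dual_decomposition_lyapunov_derivative_general D n f hconv hf gradf hgrad kG kI hkG z μ hz hμ
    hzdyn hμdyn
end

section
/- If (z, μ) is a solution of the dual-decomposition dynamics such that ż(t) = 0 for all t ∈ ℝ, then for every t ∈ ℝ the state z(t) is a consensus state (z(t) i = z(t) j for all i, j : V) and μ̇(t) = 0. (Hence the only trajectory remaining in the set {(ż, μ̇) : ż = 0} is the equilibrium (ż, μ̇) = (0, 0).) -/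
/-!
Since `ż ≡ 0`, `z` is a constant state `Z`, so `μ̇ ≡ k_I DᵀZ` is constant and `μ` is affine
in `t`. But `ż = 0` also forces `k_I D μ(t) = -k_G ∇f(Z)` for every `t`, so `D` kills the drift of
`μ`: `k_I² D DᵀZ = 0`, i.e. `L Z = 0`. On a connected graph the kernel of the Laplacian consists
of consensus states, and `ker (D Dᵀ) = ker Dᵀ` gives `DᵀZ = 0`, i.e. `μ̇ = 0`.
-/

open Matrix

theorem sub_eq_smul_of_deriv_eq_const {F : Type*} [NormedAddCommGroup F] [NormedSpace ℝ F]
    {f : ℝ → F} {c : F} (hf : Differentiable ℝ f) (hf' : ∀ t, deriv f t = c) (s t : ℝ) :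
    f t - f s = (t - s) • c := by
  have hconst : ∀ u, HasDerivAt (fun u => f u - u • c) 0 u := fun u => by
    have := (hf u).hasDerivAt.sub ((hasDerivAt_id u).smul_const c)
    rwa [hf', one_smul, sub_self] at this
  have := is_const_of_deriv_eq_zero (fun u => (hconst u).differentiableAt)
    (fun u => (hconst u).deriv) t s
  rw [sub_smul, sub_eq_sub_iff_sub_eq_sub.mpr this]

theorem SimpleGraph.Connected.rows_eq_of_lapMatrix_mul_eq_zero {V ι : Type*} [Fintype V]
    [DecidableEq V] {G : SimpleGraph V} [DecidableRel G.Adj] (hG : G.Connected)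
    {Z : Matrix V ι ℝ} (hZ : G.lapMatrix ℝ * Z = 0) (i j : V) : Z i = Z j := by
  funext k
  have hcol : G.lapMatrix ℝ *ᵥ (fun v => Z v k) = 0 := by
    funext v
    simpa [mul_apply, mulVec, dotProduct] using congrFun (congrFun hZ v) k
  exact G.lapMatrix_mulVec_eq_zero_iff_forall_reachable.mp hcol i j (hG.preconnected i j)

theorem Matrix.self_mul_transpose_mul_eq_zero {R m n p : Type*} [PartialOrder R]
    [NonUnitalRing R] [StarRing R] [StarOrderedRing R] [NoZeroDivisors R] [TrivialStar R]
    [Fintype m] [Fintype n] (D : Matrix m n R) (Z : Matrix m p R) :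
    D * Dᵀ * Z = 0 ↔ Dᵀ * Z = 0 := by
  simpa only [conjTranspose_eq_transpose_of_trivial] using self_mul_conjTranspose_mul_eq_zero D Z

theorem dual_decomposition_invariant_set_general
    {V E : Type*} [Fintype V] [Fintype E] [DecidableEq V]
    (G : SimpleGraph V) [DecidableRel G.Adj] (hG : G.Connected)
    (D : Matrix V E ℝ) (hD : D * Dᵀ = G.lapMatrix ℝ)
    (n : ℕ)
    (gradf : (V → Fin n → ℝ) → (V → Fin n → ℝ))
    (kG kI : ℝ) (hkI : 0 < kI)
    (z : ℝ → (V → Fin n → ℝ)) (μ : ℝ → (E → Fin n → ℝ))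
    (hz : Differentiable ℝ z) (hμ : Differentiable ℝ μ)
    (hzdyn : ∀ t, deriv z t = fun i k =>
      -kG * gradf (z t) i k - kI * ∑ e, D i e * μ t e k)
    (hμdyn : ∀ t, deriv μ t = fun e k => kI * ∑ i, D i e * z t i k)
    (hzdot : ∀ t, deriv z t = 0) :
    ∀ t, (∀ i j, z t i = z t j) ∧ deriv μ t = 0 := by
  -- States are read as matrices (`of`, `of.symm`), so that `D` and `Dᵀ` act by multiplication.
  set Z : Matrix V (Fin n) ℝ := z 0
  have hzc : ∀ t, z t = Z := fun t => is_const_of_deriv_eq_zero hz hzdot t 0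
  have hμdot : ∀ t, deriv μ t = of.symm (kI • (Dᵀ * Z)) := fun t => by
    ext e k
    simp [hμdyn t, hzc t, mul_apply]
  have hDμ : ∀ t, kI • (D * of (μ t)) = -kG • of (gradf Z) := fun t => by
    ext i k
    have := congrFun (congrFun ((hzdot t).symm.trans (hzdyn t)) i) k
    simp only [hzc t, Pi.zero_apply] at this
    simp only [Matrix.smul_apply, mul_apply, of_apply, smul_eq_mul]
    linarith
  have hdrift : of (μ 1) - of (μ 0) = kI • (Dᵀ * Z) := by
    simpa [of_sub_of] using congrArg of (sub_eq_smul_of_deriv_eq_const hμ hμdot 0 1)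
  have hLZ : D * Dᵀ * Z = 0 := by
    have := hDμ 1
    rw [← hDμ 0, ← sub_eq_zero, ← smul_sub, ← Matrix.mul_sub, hdrift] at this
    simpa [hkI.ne', Matrix.mul_assoc] using this
  intro t
  rw [hzc t, hμdot t, (self_mul_transpose_mul_eq_zero D Z).mp hLZ, smul_zero]
  exact ⟨hG.rows_eq_of_lapMatrix_mul_eq_zero (hD ▸ hLZ), of_symm_zero⟩

/-- If `(z, μ)` is a solution of the dual-decomposition dynamics with
`ż(t) = 0` for all `t`, then for every `t` the state `z(t)` is a consensus state and
`μ̇(t) = 0`; hence the only trajectory remaining in `{(ż, μ̇) : ż = 0}` is the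
equilibrium `(ż, μ̇) = (0, 0)`. -/
theorem dual_decomposition_invariant_set
    {V E : Type*} [Fintype V] [Fintype E] [Nonempty V] [Nonempty E] [DecidableEq V]
    (G : SimpleGraph V) [DecidableRel G.Adj] (hG : G.Connected)
    (D : Matrix V E ℝ) (hD : D * Dᵀ = G.lapMatrix ℝ)
    (n : ℕ) (hn : 1 ≤ n)
    (f : (V → Fin n → ℝ) → ℝ)
    (hconv : ConvexOn ℝ Set.univ f) (hf : ContDiff ℝ 2 f)
    (gradf : (V → Fin n → ℝ) → (V → Fin n → ℝ))
    (hgrad : ∀ x u, fderiv ℝ f x u = ∑ i, ∑ k, gradf x i k * u i k)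
    (kG kI : ℝ) (hkG : 0 < kG) (hkI : 0 < kI)
    (z : ℝ → (V → Fin n → ℝ)) (μ : ℝ → (E → Fin n → ℝ))
    (hz : Differentiable ℝ z) (hμ : Differentiable ℝ μ)
    (hzdyn : ∀ t, deriv z t = fun i k =>
      -kG * gradf (z t) i k - kI * ∑ e, D i e * μ t e k)
    (hμdyn : ∀ t, deriv μ t = fun e k => kI * ∑ i, D i e * z t i k)
    (hzdot : ∀ t, deriv z t = 0) :
    ∀ t, (∀ i j, z t i = z t j) ∧ deriv μ t = 0 :=
  dual_decomposition_invariant_set_general G hG D hD n gradf kG kI hkI z μ hz hμ hzdyn hμdyn hzdot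
end

section
/- Every equilibrium of the dual-decomposition dynamics is a global minimum of the constrained problem: if z* : V → (Fin n → ℝ) and μ* : E → (Fin n → ℝ) satisfy k_G ∇f(z*) + k_I' (D μ*) = 0 and Dᵀ z* = 0, then z* is a consensus state and f(z*) ≤ f(z) for every consensus state z : V → (Fin n → ℝ). -/
open Matrix

/-!
Let `w = z - z*`. Since `D Dᵀ = L`, we have `‖Dᵀ x‖² = xᵀ L x`, so on a connected graph the kernel
of `Dᵀ` consists exactly of the consensus states; hence `z*` is a consensus state and `Dᵀ w = 0`.
The equilibrium equation writes `∇f(z*)` as a multiple of `D μ*`, and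
`⟨D μ*, w⟩ = ⟨μ*, Dᵀ w⟩ = 0`, so `⟨∇f(z*), w⟩ = 0`. The first-order characterisation of convexity,
`f z ≥ f z* + ⟨∇f(z*), z - z*⟩`, then gives `f z* ≤ f z`.
-/

theorem ConvexOn.le_sub_of_hasFDerivAt {F : Type*} [NormedAddCommGroup F] [NormedSpace ℝ F]
    {s : Set F} {f : F → ℝ} {f' : F →L[ℝ] ℝ} {x y : F} (hf : ConvexOn ℝ s f)
    (hx : x ∈ s) (hy : y ∈ s) (hf' : HasFDerivAt f f' x) :
    f' (y - x) ≤ f y - f x := by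
  let ℓ : ℝ →ᵃ[ℝ] F := AffineMap.lineMap x y
  have hline : ConvexOn ℝ (ℓ ⁻¹' s) (f ∘ ℓ) := hf.comp_affineMap ℓ
  have hderiv : HasDerivAt (f ∘ ℓ) (f' (y - x)) 0 := by
    rw [← AffineMap.lineMap_apply_zero x y (k := ℝ)] at hf'
    exact hf'.comp_hasDerivAt 0 AffineMap.hasDerivAt_lineMap
  simpa [slope_def_field, ℓ] using
    hline.le_slope_of_hasDerivAt (by simpa [ℓ] using hx) (by simpa [ℓ] using hy) one_pos hderiv

theorem Matrix.sum_sum_mul_sum_mul_comm {R V E ι : Type*} [CommSemiring R]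
    [Fintype V] [Fintype E] [Fintype ι] (D : Matrix V E R) (μ : E → ι → R) (w : V → ι → R) :
    ∑ i, ∑ k, (∑ e, D i e * μ e k) * w i k = ∑ e, ∑ k, μ e k * ∑ i, D i e * w i k := by
  simp only [Finset.sum_mul, Finset.mul_sum]
  rw [Finset.sum_comm, Finset.sum_comm (γ := E)]
  refine Finset.sum_congr rfl fun k _ => ?_
  rw [Finset.sum_comm]
  exact Finset.sum_congr rfl fun e _ => Finset.sum_congr rfl fun i _ => by ring

section IncidenceFactor

variable {V E : Type*} [Fintype V] [Fintype E] [DecidableEq V]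
  {G : SimpleGraph V} [DecidableRel G.Adj] {D : Matrix V E ℝ}

theorem SimpleGraph.Connected.transpose_mulVec_eq_zero_iff (hG : G.Connected)
    (hD : D * Dᵀ = G.lapMatrix ℝ) (x : V → ℝ) :
    Dᵀ *ᵥ x = 0 ↔ ∀ i j, x i = x j := by
  have hquad : toLinearMap₂' ℝ (G.lapMatrix ℝ) x x = (Dᵀ *ᵥ x) ⬝ᵥ (Dᵀ *ᵥ x) := by
    rw [toLinearMap₂'_apply', ← hD, ← mulVec_mulVec, dotProduct_mulVec, mulVec_transpose]
  rw [← dotProduct_self_eq_zero, ← hquad,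
    G.lapMatrix_toLinearMap₂'_apply'_eq_zero_iff_forall_reachable]
  exact ⟨fun h i j => h i j (hG.preconnected i j), fun h i j _ => h i j⟩

theorem SimpleGraph.Connected.sum_mul_apply_eq_zero_iff {ι : Type*} (hG : G.Connected)
    (hD : D * Dᵀ = G.lapMatrix ℝ) (z : V → ι → ℝ) :
    (fun e k => ∑ i, D i e * z i k) = 0 ↔ ∀ i j, z i = z j := by
  have hcol (k : ι) : (∀ e, ∑ i, D i e * z i k = 0) ↔ ∀ i j, z i k = z j k := by
    rw [← hG.transpose_mulVec_eq_zero_iff hD, funext_iff]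
    rfl
  simp only [funext_iff, Pi.zero_apply]
  rw [forall_comm]
  simp only [hcol]
  exact ⟨fun h i j k => h k i j, fun h k i j => h i j k⟩

end IncidenceFactor

theorem dual_decomposition_equilibrium_is_global_min_general
    {V E : Type*} [Fintype V] [Fintype E] [DecidableEq V]
    (G : SimpleGraph V) [DecidableRel G.Adj] (hG : G.Connected)
    (D : Matrix V E ℝ) (hD : D * Dᵀ = G.lapMatrix ℝ)
    (n : ℕ)
    (f : (V → Fin n → ℝ) → ℝ)
    (hconv : ConvexOn ℝ Set.univ f) (hdiff : Differentiable ℝ f)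
    (gradf : (V → Fin n → ℝ) → (V → Fin n → ℝ))
    (hgrad : ∀ x u, fderiv ℝ f x u = ∑ i, ∑ k, gradf x i k * u i k)
    (kG kI : ℝ) (hkG : 0 < kG)
    (zs : V → Fin n → ℝ) (μs : E → Fin n → ℝ)
    (hstat : (fun i k => kG * gradf zs i k + kI * ∑ e, D i e * μs e k)
      = (0 : V → Fin n → ℝ))
    (hcons : (fun e k => ∑ i, D i e * zs i k) = (0 : E → Fin n → ℝ)) :
    (∀ i j, zs i = zs j) ∧
    ∀ z : V → Fin n → ℝ, (∀ i j, z i = z j) → f zs ≤ f z := by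
  have hconsensus := hG.sum_mul_apply_eq_zero_iff (ι := Fin n) hD
  have hzs := (hconsensus zs).1 hcons
  refine ⟨hzs, fun z hz => ?_⟩
  have hker := (hconsensus (z - zs)).2 fun i j => by simp only [Pi.sub_apply, hz i j, hzs i j]
  have hperp : ∑ i, ∑ k, (∑ e, D i e * μs e k) * (z - zs) i k = 0 := by
    rw [sum_sum_mul_sum_mul_comm]
    exact Finset.sum_eq_zero fun e _ => Finset.sum_eq_zero fun k _ => by
      rw [congrFun₂ hker e k, Pi.zero_apply, Pi.zero_apply, mul_zero]
  have hgrad_perp : fderiv ℝ f zs (z - zs) = 0 := by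
    have h := congrArg (fun g : V → Fin n → ℝ => ∑ i, ∑ k, g i k * (z - zs) i k) hstat
    simp only [add_mul, Finset.sum_add_distrib, mul_assoc, ← Finset.mul_sum, Pi.zero_apply,
      zero_mul, Finset.sum_const_zero] at h
    rw [hperp, mul_zero, add_zero] at h
    rw [hgrad]
    exact (mul_eq_zero.1 h).resolve_left hkG.ne'
  linarith [hconv.le_sub_of_hasFDerivAt (Set.mem_univ zs) (Set.mem_univ z) (hdiff zs).hasFDerivAt]

/-- Every equilibrium of the dual-decomposition dynamics is a global
minimum of the consensus-constrained problem: if `k_G ∇f(z*) + k_I' (D μ*) = 0` and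
`Dᵀ z* = 0`, then `z*` is a consensus state and `f(z*) ≤ f(z)` for every consensus
state `z`. -/
theorem dual_decomposition_equilibrium_is_global_min
    {V E : Type*} [Fintype V] [Fintype E] [Nonempty V] [Nonempty E] [DecidableEq V]
    (G : SimpleGraph V) [DecidableRel G.Adj] (hG : G.Connected)
    (D : Matrix V E ℝ) (hD : D * Dᵀ = G.lapMatrix ℝ)
    (n : ℕ) (hn : 1 ≤ n)
    (f : (V → Fin n → ℝ) → ℝ)
    (hconv : ConvexOn ℝ Set.univ f) (hdiff : Differentiable ℝ f)
    (gradf : (V → Fin n → ℝ) → (V → Fin n → ℝ))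
    (hgrad : ∀ x u, fderiv ℝ f x u = ∑ i, ∑ k, gradf x i k * u i k)
    (kG kI : ℝ) (hkG : 0 < kG) (hkI : 0 < kI)
    (zs : V → Fin n → ℝ) (μs : E → Fin n → ℝ)
    (hstat : (fun i k => kG * gradf zs i k + kI * ∑ e, D i e * μs e k)
      = (0 : V → Fin n → ℝ))
    (hcons : (fun e k => ∑ i, D i e * zs i k) = (0 : E → Fin n → ℝ)) :
    (∀ i j, zs i = zs j) ∧
    ∀ z : V → Fin n → ℝ, (∀ i j, z i = z j) → f zs ≤ f z :=
  dual_decomposition_equilibrium_is_global_min_general G hG D hD n f hconv hdiff gradf hgrad kG kI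
    hkG zs μs hstat hcons
end

section
/- Along any solution of the PI distributed-optimization dynamics, the curves z and μ are twice differentiable and the Lyapunov function V(t) = (1/2)‖ż(t)‖² + (1/2)‖μ̇(t)‖² is differentiable with derivative V'(t) = -( k_G · f''(z(t))(ż(t), ż(t)) + k_P · ⟨ż(t), L ż(t)⟩ ) ≤ 0 for every t ∈ ℝ; in particular, V is antitone (monotonically nonincreasing) on ℝ. -/
/-!
Along the flow, `V' = ⟨ż, z̈⟩ + ⟨μ̇, μ̈⟩` with `z̈ = -k_G ∇²f(z) ż - k_P L ż - k_I D μ̇` and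
`μ̈ = k_I Dᵀ ż`. The integral coupling terms `-k_I ⟨ż, D μ̇⟩` and `k_I ⟨μ̇, Dᵀ ż⟩` cancel, which
leaves `-(k_G f''(z)(ż, ż) + k_P ⟨ż, L ż⟩)`. Both terms are nonnegative: a convex `C²` function
has monotone derivative along every line, and the Laplacian is positive semidefinite.
-/

open Matrix

section StatePairing

variable {ι ι' κ : Type*} [Fintype ι] [Fintype ι'] [Fintype κ]

def statePairing (u v : ι → κ → ℝ) : ℝ := ∑ i, ∑ k, u i k * v i k

def stateMul (A : Matrix ι ι' ℝ) (w : ι' → κ → ℝ) : ι → κ → ℝ :=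
  fun i k => ∑ j, A i j * w j k

lemma statePairing_sub_right (u v w : ι → κ → ℝ) :
    statePairing u (v - w) = statePairing u v - statePairing u w := by
  simp only [statePairing, Pi.sub_apply, mul_sub, Finset.sum_sub_distrib]

lemma statePairing_smul_right (c : ℝ) (u v : ι → κ → ℝ) :
    statePairing u (c • v) = c * statePairing u v := by
  simp only [statePairing, Pi.smul_apply, smul_eq_mul, Finset.mul_sum, mul_left_comm]

lemma statePairing_stateMul (A : Matrix ι ι' ℝ) (u : ι → κ → ℝ) (w : ι' → κ → ℝ) :
    statePairing u (stateMul A w) = statePairing w (stateMul Aᵀ u) := by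
  simp only [statePairing, stateMul, transpose_apply, Finset.mul_sum]
  calc ∑ i, ∑ k, ∑ j, u i k * (A i j * w j k)
      = ∑ i, ∑ j, ∑ k, w j k * (A i j * u i k) :=
        Finset.sum_congr rfl fun i _ => by
          rw [Finset.sum_comm]; simp only [mul_left_comm, mul_comm]
    _ = ∑ j, ∑ k, ∑ i, w j k * (A i j * u i k) := by
        rw [Finset.sum_comm]; exact Finset.sum_congr rfl fun j _ => Finset.sum_comm

lemma Matrix.PosSemidef.statePairing_stateMul_self_nonneg {A : Matrix ι ι ℝ}
    (hA : A.PosSemidef) (u : ι → κ → ℝ) : 0 ≤ statePairing u (stateMul A u) := by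
  rw [statePairing, Finset.sum_comm]
  refine Finset.sum_nonneg fun k _ => ?_
  simpa [dotProduct, mulVec, stateMul] using hA.dotProduct_mulVec_nonneg (fun i => u i k)

section Basis

variable [DecidableEq ι] [DecidableEq κ]

lemma sum_smul_single_single (u : ι → κ → ℝ) :
    ∑ i, ∑ k, u i k • Pi.single i (Pi.single k 1 : κ → ℝ) = u := by
  ext i k
  simp [Finset.sum_apply, Pi.single_apply, ite_apply]

lemma statePairing_single_single_right (u : ι → κ → ℝ) (i : ι) (k : κ) :
    statePairing u (Pi.single i (Pi.single k 1)) = u i k := by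
  simp [statePairing, Pi.single_apply, ite_apply]

lemma ContinuousLinearMap.statePairing_apply_single_single (ℓ : (ι → κ → ℝ) →L[ℝ] ℝ)
    (u : ι → κ → ℝ) : statePairing u (fun i k => ℓ (Pi.single i (Pi.single k 1))) = ℓ u := by
  conv_rhs => rw [← sum_smul_single_single u]
  simp only [statePairing, map_sum, map_smul, smul_eq_mul]

end Basis

lemma HasDerivAt.half_statePairing_self {x : ℝ → ι → κ → ℝ} {x' : ι → κ → ℝ} {t : ℝ}
    (hx : HasDerivAt x x' t) :
    HasDerivAt (fun s => 1 / 2 * statePairing (x s) (x s)) (statePairing (x t) x') t := by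
  have hc (i : ι) (k : κ) : HasDerivAt (fun s => x s i k) (x' i k) t :=
    hasDerivAt_pi.1 (hasDerivAt_pi.1 hx i) k
  have h : HasDerivAt (fun s => 1 / 2 * ∑ i, ∑ k, x s i k * x s i k)
      (1 / 2 * ∑ i, ∑ k, (x' i k * x t i k + x t i k * x' i k)) t :=
    (HasDerivAt.fun_sum fun i _ => HasDerivAt.fun_sum fun k _ =>
      (hc i k).mul (hc i k)).const_mul (1 / 2 : ℝ)
  refine h.congr_deriv ?_
  simp only [statePairing, Finset.mul_sum]
  exact Finset.sum_congr rfl fun i _ => Finset.sum_congr rfl fun k _ => by ring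

end StatePairing

lemma HasDerivAt.stateMul {ι ι' κ : Type*} [Fintype ι'] [Fintype κ] (A : Matrix ι ι' ℝ)
    {w : ℝ → ι' → κ → ℝ} {w' : ι' → κ → ℝ} {t : ℝ} (hw : HasDerivAt w w' t) :
    HasDerivAt (fun s => stateMul A (w s)) (stateMul A w') t := by
  refine hasDerivAt_pi.2 fun i => hasDerivAt_pi.2 fun k => ?_
  exact HasDerivAt.fun_sum fun j _ => (hasDerivAt_pi.1 (hasDerivAt_pi.1 hw j) k).const_mul (A i j)

lemma ConvexOn.fderiv_fderiv_apply_self_nonneg {X : Type*} [NormedAddCommGroup X]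
    [NormedSpace ℝ X] {f : X → ℝ} (hconv : ConvexOn ℝ Set.univ f) (hf : ContDiff ℝ 2 f)
    (x u : X) : 0 ≤ fderiv ℝ (fderiv ℝ f) x u u := by
  have hline : ConvexOn ℝ Set.univ fun s : ℝ => f (x + s • u) :=
    (hconv.translate_right x).comp_linearMap (LinearMap.toSpanSingleton ℝ X u)
  have hc (s : ℝ) : HasDerivAt (fun s : ℝ => x + s • u) u s := by
    simpa using ((hasDerivAt_id s).smul_const u).const_add x
  have hdf (s : ℝ) : HasDerivAt (fun s : ℝ => f (x + s • u)) (fderiv ℝ f (x + s • u) u) s :=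
    (hf.differentiable two_ne_zero _).hasFDerivAt.comp_hasDerivAt s (hc s)
  have hmono : Monotone fun s : ℝ => fderiv ℝ f (x + s • u) u := by
    simpa [funext fun s => (hdf s).deriv] using
      hline.monotoneOn_deriv fun s _ => (hdf s).differentiableAt
  have hd2f : HasDerivAt (fun s : ℝ => fderiv ℝ f (x + s • u) u)
      (fderiv ℝ (fderiv ℝ f) x u u) 0 := by
    have h := ((hf.fderiv_right (m := 1) le_rfl).differentiable one_ne_zero
      (x + (0 : ℝ) • u)).hasFDerivAt.comp_hasDerivAt 0 (hc 0)
    simpa using h.clm_apply (hasDerivAt_const 0 u)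
  simpa [hd2f.deriv] using hmono.deriv_nonneg (x := 0)

section PIDynamics

variable {ι ε κ : Type*} [Fintype ι] [Fintype ε] [Fintype κ]
  {f : (ι → κ → ℝ) → ℝ} {gradf : (ι → κ → ℝ) → ι → κ → ℝ}
  {L : Matrix ι ι ℝ} {D : Matrix ι ε ℝ} {kG kP kI : ℝ} {z : ℝ → ι → κ → ℝ} {μ : ℝ → ε → κ → ℝ}

lemma hasDerivAt_deriv_of_pi_dynamics_integrator (hz : Differentiable ℝ z)
    (hμdyn : ∀ t, deriv μ t = kI • stateMul Dᵀ (z t)) (t : ℝ) :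
    HasDerivAt (deriv μ) (kI • stateMul Dᵀ (deriv z t)) t :=
  (((hz t).hasDerivAt.stateMul Dᵀ).const_smul kI).congr_of_eventuallyEq
    (Filter.Eventually.of_forall hμdyn)

section Gradient

variable [DecidableEq ι] [DecidableEq κ]

lemma HasDerivAt.gradient_comp (hf : ContDiff ℝ 2 f)
    (hgrad : ∀ x u, fderiv ℝ f x u = statePairing (gradf x) u)
    {z' : ι → κ → ℝ} {t : ℝ} (hz : HasDerivAt z z' t) :
    HasDerivAt (fun s => gradf (z s))
      (fun i k => fderiv ℝ (fderiv ℝ f) (z t) z' (Pi.single i (Pi.single k 1))) t := by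
  have hdf : HasDerivAt (fun s => fderiv ℝ f (z s)) (fderiv ℝ (fderiv ℝ f) (z t) z') t :=
    ((hf.fderiv_right (m := 1) le_rfl).differentiable one_ne_zero
      (z t)).hasFDerivAt.comp_hasDerivAt t hz
  refine hasDerivAt_pi.2 fun i => hasDerivAt_pi.2 fun k => ?_
  have hcoord : (fun s => gradf (z s) i k) =
      fun s => fderiv ℝ f (z s) (Pi.single i (Pi.single k 1)) := by
    funext s
    rw [hgrad, statePairing_single_single_right]
  rw [hcoord]
  simpa using hdf.clm_apply (hasDerivAt_const t _)

lemma hasDerivAt_deriv_of_pi_dynamics_state (hf : ContDiff ℝ 2 f)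
    (hgrad : ∀ x u, fderiv ℝ f x u = statePairing (gradf x) u)
    (hz : Differentiable ℝ z) (hμ : Differentiable ℝ μ)
    (hzdyn : ∀ t, deriv z t =
      -kG • gradf (z t) - kP • stateMul L (z t) - kI • stateMul D (μ t)) (t : ℝ) :
    HasDerivAt (deriv z)
      (-kG • (fun i k => fderiv ℝ (fderiv ℝ f) (z t) (deriv z t) (Pi.single i (Pi.single k 1)))
        - kP • stateMul L (deriv z t) - kI • stateMul D (deriv μ t)) t :=
  ((((hz t).hasDerivAt.gradient_comp hf hgrad).const_smul (-kG)).sub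
    (((hz t).hasDerivAt.stateMul L).const_smul kP)).sub
    (((hμ t).hasDerivAt.stateMul D).const_smul kI) |>.congr_of_eventuallyEq
      (Filter.Eventually.of_forall hzdyn)

end Gradient

theorem hasDerivAt_pi_lyapunov (hf : ContDiff ℝ 2 f)
    (hgrad : ∀ x u, fderiv ℝ f x u = statePairing (gradf x) u)
    (hz : Differentiable ℝ z) (hμ : Differentiable ℝ μ)
    (hzdyn : ∀ t, deriv z t =
      -kG • gradf (z t) - kP • stateMul L (z t) - kI • stateMul D (μ t))
    (hμdyn : ∀ t, deriv μ t = kI • stateMul Dᵀ (z t)) (t : ℝ) :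
    HasDerivAt
      (fun s => 1 / 2 * statePairing (deriv z s) (deriv z s)
        + 1 / 2 * statePairing (deriv μ s) (deriv μ s))
      (-(kG * fderiv ℝ (fderiv ℝ f) (z t) (deriv z t) (deriv z t)
        + kP * statePairing (deriv z t) (stateMul L (deriv z t)))) t := by
  classical
  have hz₂ := hasDerivAt_deriv_of_pi_dynamics_state hf hgrad hz hμ hzdyn t
  have hμ₂ := hasDerivAt_deriv_of_pi_dynamics_integrator hz hμdyn t
  refine (hz₂.half_statePairing_self.add hμ₂.half_statePairing_self).congr_deriv ?_
  simp only [statePairing_sub_right, statePairing_smul_right,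
    ContinuousLinearMap.statePairing_apply_single_single, statePairing_stateMul D (deriv z t)]
  ring

end PIDynamics

theorem pi_distributed_optimization_lyapunov_derivative_general
    {V E : Type*} [Fintype V] [Fintype E] [DecidableEq V]
    (G : SimpleGraph V) [DecidableRel G.Adj]
    (D : Matrix V E ℝ)
    (n : ℕ)
    (f : (V → Fin n → ℝ) → ℝ)
    (hconv : ConvexOn ℝ Set.univ f) (hf : ContDiff ℝ 2 f)
    (gradf : (V → Fin n → ℝ) → (V → Fin n → ℝ))
    (hgrad : ∀ x u, fderiv ℝ f x u = ∑ i, ∑ k, gradf x i k * u i k)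
    (kG kP kI : ℝ) (hkG : 0 < kG) (hkP : 0 < kP)
    (z : ℝ → (V → Fin n → ℝ)) (μ : ℝ → (E → Fin n → ℝ))
    (hz : Differentiable ℝ z) (hμ : Differentiable ℝ μ)
    (hzdyn : ∀ t, deriv z t = fun i k =>
      -kG * gradf (z t) i k - kP * (∑ j, G.lapMatrix ℝ i j * z t j k)
        - kI * ∑ e, D i e * μ t e k)
    (hμdyn : ∀ t, deriv μ t = fun e k => kI * ∑ i, D i e * z t i k) :
    Differentiable ℝ (deriv z) ∧ Differentiable ℝ (deriv μ) ∧
    (∀ t, HasDerivAt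
      (fun s => (1 / 2) * (∑ i, ∑ k, deriv z s i k * deriv z s i k)
        + (1 / 2) * (∑ e, ∑ k, deriv μ s e k * deriv μ s e k))
      (-(kG * iteratedFDeriv ℝ 2 f (z t) ![deriv z t, deriv z t]
        + kP * ∑ i, ∑ k, deriv z t i k * (∑ j, G.lapMatrix ℝ i j * deriv z t j k))) t) ∧
    (∀ t, -(kG * iteratedFDeriv ℝ 2 f (z t) ![deriv z t, deriv z t]
        + kP * ∑ i, ∑ k, deriv z t i k * (∑ j, G.lapMatrix ℝ i j * deriv z t j k)) ≤ 0) ∧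
    Antitone (fun s => (1 / 2) * (∑ i, ∑ k, deriv z s i k * deriv z s i k)
        + (1 / 2) * (∑ e, ∑ k, deriv μ s e k * deriv μ s e k)) := by
  have hzdyn' : ∀ t, deriv z t = -kG • gradf (z t) - kP • stateMul (G.lapMatrix ℝ) (z t)
      - kI • stateMul D (μ t) := hzdyn
  have hμdyn' : ∀ t, deriv μ t = kI • stateMul Dᵀ (z t) := hμdyn
  have hHess (t : ℝ) : iteratedFDeriv ℝ 2 f (z t) ![deriv z t, deriv z t] =
      fderiv ℝ (fderiv ℝ f) (z t) (deriv z t) (deriv z t) := by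
    simp [iteratedFDeriv_two_apply]
  have hV := hasDerivAt_pi_lyapunov hf hgrad hz hμ hzdyn' hμdyn'
  have hV_nonpos (t : ℝ) : -(kG * fderiv ℝ (fderiv ℝ f) (z t) (deriv z t) (deriv z t)
      + kP * statePairing (deriv z t) (stateMul (G.lapMatrix ℝ) (deriv z t))) ≤ 0 :=
    neg_nonpos.2 <| add_nonneg
      (mul_nonneg hkG.le (hconv.fderiv_fderiv_apply_self_nonneg hf _ _))
      (mul_nonneg hkP.le ((G.posSemidef_lapMatrix ℝ).statePairing_stateMul_self_nonneg _))
  simp only [hHess]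
  exact ⟨fun t => (hasDerivAt_deriv_of_pi_dynamics_state hf hgrad hz hμ hzdyn' t).differentiableAt,
    fun t => (hasDerivAt_deriv_of_pi_dynamics_integrator hz hμdyn' t).differentiableAt,
    hV, hV_nonpos,
    antitone_of_deriv_nonpos (fun t => (hV t).differentiableAt) fun t => (hV t).deriv ▸ hV_nonpos t⟩

/-- Along any solution of the PI distributed-optimization dynamics
`ż = -k_G ∇f(z) - k_P (L z) - k_I' (D μ)`, `μ̇ = k_I' (Dᵀ z)`, the curves `z` and `μ`
are twice differentiable and `V(t) = ½‖ż(t)‖² + ½‖μ̇(t)‖²` is differentiable with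
`V'(t) = -(k_G · f''(z(t))(ż(t), ż(t)) + k_P · ⟨ż(t), L ż(t)⟩) ≤ 0` for all `t`;
hence `V` is antitone. -/
theorem pi_distributed_optimization_lyapunov_derivative
    {V E : Type*} [Fintype V] [Fintype E] [Nonempty V] [Nonempty E] [DecidableEq V]
    (G : SimpleGraph V) [DecidableRel G.Adj] (hG : G.Connected)
    (D : Matrix V E ℝ) (hD : D * Dᵀ = G.lapMatrix ℝ)
    (n : ℕ) (hn : 1 ≤ n)
    (f : (V → Fin n → ℝ) → ℝ)
    (hconv : ConvexOn ℝ Set.univ f) (hf : ContDiff ℝ 2 f)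
    (gradf : (V → Fin n → ℝ) → (V → Fin n → ℝ))
    (hgrad : ∀ x u, fderiv ℝ f x u = ∑ i, ∑ k, gradf x i k * u i k)
    (kG kP kI : ℝ) (hkG : 0 < kG) (hkP : 0 < kP) (hkI : 0 < kI)
    (z : ℝ → (V → Fin n → ℝ)) (μ : ℝ → (E → Fin n → ℝ))
    (hz : Differentiable ℝ z) (hμ : Differentiable ℝ μ)
    (hzdyn : ∀ t, deriv z t = fun i k =>
      -kG * gradf (z t) i k - kP * (∑ j, G.lapMatrix ℝ i j * z t j k)
        - kI * ∑ e, D i e * μ t e k)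
    (hμdyn : ∀ t, deriv μ t = fun e k => kI * ∑ i, D i e * z t i k) :
    Differentiable ℝ (deriv z) ∧ Differentiable ℝ (deriv μ) ∧
    (∀ t, HasDerivAt
      (fun s => (1 / 2) * (∑ i, ∑ k, deriv z s i k * deriv z s i k)
        + (1 / 2) * (∑ e, ∑ k, deriv μ s e k * deriv μ s e k))
      (-(kG * iteratedFDeriv ℝ 2 f (z t) ![deriv z t, deriv z t]
        + kP * ∑ i, ∑ k, deriv z t i k * (∑ j, G.lapMatrix ℝ i j * deriv z t j k))) t) ∧
    (∀ t, -(kG * iteratedFDeriv ℝ 2 f (z t) ![deriv z t, deriv z t]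
        + kP * ∑ i, ∑ k, deriv z t i k * (∑ j, G.lapMatrix ℝ i j * deriv z t j k)) ≤ 0) ∧
    Antitone (fun s => (1 / 2) * (∑ i, ∑ k, deriv z s i k * deriv z s i k)
        + (1 / 2) * (∑ e, ∑ k, deriv μ s e k * deriv μ s e k)) :=
  pi_distributed_optimization_lyapunov_derivative_general G D n f hconv hf gradf hgrad kG kP kI hkG
    hkP z μ hz hμ hzdyn hμdyn
end

section
/- If (z, μ) is a solution of the PI distributed-optimization dynamics such that ż(t) = 0 for all t ∈ ℝ, then for every t ∈ ℝ the state z(t) is a consensus state (z(t) i = z(t) j for all i, j : V) and μ̇(t) = 0. (Hence the only trajectory remaining in the set {(ż, μ̇) : ż = 0} is the equilibrium (ż, μ̇) = (0, 0).) -/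
/-!
Since `ż ≡ 0`, the state `z` is constant, and the PI law then forces the integral term `D μ` to
be constant as well. Differentiating it gives `0 = D μ̇ = kI D Dᵀ z = kI L z`. On a connected
graph `L z = 0` means consensus, and `⟨z, D Dᵀ z⟩ = ‖Dᵀ z‖²` gives `Dᵀ z = 0`, that is `μ̇ = 0`.
-/

open Matrix Topology

theorem HasDerivAt.map_eq_zero_of_eventually_const {𝕜 F G : Type*} [NontriviallyNormedField 𝕜]
    [NormedAddCommGroup F] [NormedSpace 𝕜 F] [NormedAddCommGroup G] [NormedSpace 𝕜 G]
    (A : F →L[𝕜] G) {g : 𝕜 → F} {g' : F} {x : 𝕜} (hg : HasDerivAt g g' x) {c : G}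
    (hc : ∀ᶠ y in 𝓝 x, A (g y) = c) : A g' = 0 :=
  (A.hasFDerivAt.comp_hasDerivAt x hg).unique ((hasDerivAt_const x c).congr_of_eventuallyEq hc)

theorem SimpleGraph.Connected.row_eq_of_lapMatrix_mul_eq_zero {V ι : Type*} [Fintype V]
    [DecidableEq V] {G : SimpleGraph V} [DecidableRel G.Adj] (hG : G.Connected)
    {Z : Matrix V ι ℝ} (h : G.lapMatrix ℝ * Z = 0) (i j : V) : Z i = Z j := by
  funext k
  have hk : G.lapMatrix ℝ *ᵥ (fun v => Z v k) = 0 := funext fun v => congrFun₂ h v k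
  exact G.lapMatrix_mulVec_eq_zero_iff_forall_reachable.mp hk i j (hG.preconnected i j)

theorem pi_distributed_optimization_invariant_set_general
    {V E : Type*} [Fintype V] [Fintype E] [DecidableEq V]
    (G : SimpleGraph V) [DecidableRel G.Adj] (hG : G.Connected)
    (D : Matrix V E ℝ) (hD : D * Dᵀ = G.lapMatrix ℝ)
    (n : ℕ)
    (gradf : (V → Fin n → ℝ) → (V → Fin n → ℝ))
    (kG kP kI : ℝ) (hkI : 0 < kI)
    (z : ℝ → (V → Fin n → ℝ)) (μ : ℝ → (E → Fin n → ℝ))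
    (hz : Differentiable ℝ z) (hμ : Differentiable ℝ μ)
    (hzdyn : ∀ t, deriv z t = fun i k =>
      -kG * gradf (z t) i k - kP * (∑ j, G.lapMatrix ℝ i j * z t j k)
        - kI * ∑ e, D i e * μ t e k)
    (hμdyn : ∀ t, deriv μ t = fun e k => kI * ∑ i, D i e * z t i k)
    (hzdot : ∀ t, deriv z t = 0) :
    ∀ t, (∀ i j, z t i = z t j) ∧ deriv μ t = 0 := by
  have hz_const : ∀ t, z t = z 0 := fun t => is_const_of_deriv_eq_zero hz hzdot t 0
  have hzdyn' : ∀ t, of (deriv z t) = -kG • of (gradf (z t)) - kP • (G.lapMatrix ℝ * of (z t))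
      - kI • (D * of (μ t)) := fun t => by
    rw [hzdyn t]; rfl
  have hμdyn' : ∀ t, of (deriv μ t) = kI • (Dᵀ * of (z t)) := fun t => by
    rw [hμdyn t]; rfl
  have hDμ_const : ∀ t, D * of (μ t) = D * of (μ 0) := by
    intro t
    have h₀ := hzdyn' 0
    have h₁ := hzdyn' t
    rw [hzdot, of_zero] at h₀ h₁
    rw [hz_const t] at h₁
    exact smul_right_injective _ hkI.ne' (sub_right_injective (h₁.symm.trans h₀))
  intro t
  have hDμdot : D * of (deriv μ t) = 0 := by
    let A : (E → Fin n → ℝ) →L[ℝ] (V → Fin n → ℝ) :=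
      (mulLeftLinearMap (Fin n) ℝ D).toContinuousLinearMap
    exact (hμ t).hasDerivAt.map_eq_zero_of_eventually_const A (.of_forall hDμ_const)
  have hL : G.lapMatrix ℝ * of (z t) = 0 := by
    rw [hμdyn' t, Matrix.mul_smul, ← Matrix.mul_assoc, hD, smul_eq_zero] at hDμdot
    exact hDμdot.resolve_left hkI.ne'
  have hDz : Dᵀ * of (z t) = 0 := by
    rwa [← conjTranspose_eq_transpose_of_trivial, ← self_mul_conjTranspose_mul_eq_zero,
      conjTranspose_eq_transpose_of_trivial, hD]
  refine ⟨hG.row_eq_of_lapMatrix_mul_eq_zero hL, of.injective ?_⟩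
  rw [hμdyn' t, hDz, smul_zero, of_zero]

/-- If `(z, μ)` is a solution of the PI distributed-optimization
dynamics with `ż(t) = 0` for all `t`, then for every `t` the state `z(t)` is a
consensus state and `μ̇(t) = 0`; hence the only trajectory remaining in
`{(ż, μ̇) : ż = 0}` is the equilibrium `(ż, μ̇) = (0, 0)`. -/
theorem pi_distributed_optimization_invariant_set
    {V E : Type*} [Fintype V] [Fintype E] [Nonempty V] [Nonempty E] [DecidableEq V]
    (G : SimpleGraph V) [DecidableRel G.Adj] (hG : G.Connected)
    (D : Matrix V E ℝ) (hD : D * Dᵀ = G.lapMatrix ℝ)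
    (n : ℕ) (hn : 1 ≤ n)
    (f : (V → Fin n → ℝ) → ℝ)
    (hconv : ConvexOn ℝ Set.univ f) (hf : ContDiff ℝ 2 f)
    (gradf : (V → Fin n → ℝ) → (V → Fin n → ℝ))
    (hgrad : ∀ x u, fderiv ℝ f x u = ∑ i, ∑ k, gradf x i k * u i k)
    (kG kP kI : ℝ) (hkG : 0 < kG) (hkP : 0 < kP) (hkI : 0 < kI)
    (z : ℝ → (V → Fin n → ℝ)) (μ : ℝ → (E → Fin n → ℝ))
    (hz : Differentiable ℝ z) (hμ : Differentiable ℝ μ)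
    (hzdyn : ∀ t, deriv z t = fun i k =>
      -kG * gradf (z t) i k - kP * (∑ j, G.lapMatrix ℝ i j * z t j k)
        - kI * ∑ e, D i e * μ t e k)
    (hμdyn : ∀ t, deriv μ t = fun e k => kI * ∑ i, D i e * z t i k)
    (hzdot : ∀ t, deriv z t = 0) :
    ∀ t, (∀ i j, z t i = z t j) ∧ deriv μ t = 0 :=
  pi_distributed_optimization_invariant_set_general G hG D hD n gradf kG kP kI hkI z μ hz hμ hzdyn
    hμdyn hzdot
end

section
/- Transfer of Lagrange multipliers to a spanning tree: let G and T be connected simple graphs on the same nonempty finite vertex type V, and let D : Matrix V E ℝ and D_T : Matrix V E_T ℝ satisfy D * Dᵀ = G.lapMatrix ℝ and D_T * D_Tᵀ = T.lapMatrix ℝ. Then for every λ : E → ℝ there exists λ_T : E_T → ℝ such that D *ᵥ λ = D_T *ᵥ λ_T; i.e., the column space of D is contained in the column space of D_T (in fact the two column spaces coincide). -/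
/-! Over `ℝ` a matrix `A` and `A * Aᵀ` have the same column space, so the column spaces of `D`
and `D_T` are those of the Laplacians of `G` and `T`. A Laplacian is symmetric and kills the
constant vectors, so its column space lies in the hyperplane `{x | ∑ x = 0}`. For connected `T`
the kernel of the Laplacian is exactly the constants, so by rank–nullity its column space is the
whole hyperplane. -/

open Matrix

namespace Matrix

variable {m n R : Type*} [Fintype m] [Fintype n]

theorem range_mulVecLin_mul_transpose_self [Field R] [LinearOrder R] [IsStrictOrderedRing R]
    (A : Matrix m n R) : LinearMap.range (A * Aᵀ).mulVecLin = LinearMap.range A.mulVecLin :=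
  Submodule.eq_of_le_of_finrank_eq
    (by rw [mulVecLin_mul]; exact LinearMap.range_comp_le_range _ _) (rank_self_mul_transpose A)

theorem range_mulVecLin_le_ker_dotProductEquiv [CommRing R] [DecidableEq m] {A : Matrix m n R}
    {v : m → R} (hv : v ᵥ* A = 0) :
    LinearMap.range A.mulVecLin ≤ LinearMap.ker (dotProductEquiv R m v) := by
  rintro _ ⟨w, rfl⟩
  simp [dotProduct_mulVec, hv]

end Matrix

namespace SimpleGraph

variable {V : Type*} [Fintype V] [DecidableEq V]

theorem range_lapMatrix_le_ker_dotProductEquiv_one (G : SimpleGraph V) [DecidableRel G.Adj] :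
    LinearMap.range (G.lapMatrix ℝ).mulVecLin ≤ LinearMap.ker (dotProductEquiv ℝ V fun _ => 1) := by
  refine range_mulVecLin_le_ker_dotProductEquiv ?_
  rw [← mulVec_transpose, (G.isSymm_lapMatrix (R := ℝ)).eq, lapMatrix_mulVec_const_eq_zero]

theorem Connected.finrank_range_lapMatrix {G : SimpleGraph V} [DecidableRel G.Adj]
    (hG : G.Connected) :
    Module.finrank ℝ (LinearMap.range (G.lapMatrix ℝ).mulVecLin) + 1 = Fintype.card V := by
  have := hG.preconnected.subsingleton_connectedComponent
  have hcard : Fintype.card G.ConnectedComponent = 1 :=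
    Fintype.card_eq_one_iff.mpr
      ⟨G.connectedComponentMk hG.nonempty.some, fun _ => Subsingleton.elim _ _⟩
  have hker := G.card_connectedComponent_eq_finrank_ker_toLin'_lapMatrix
  rw [hcard, toLin'_apply'] at hker
  rw [hker, LinearMap.finrank_range_add_finrank_ker, Module.finrank_fintype_fun_eq_card]

theorem Connected.range_lapMatrix {G : SimpleGraph V} [DecidableRel G.Adj] (hG : G.Connected) :
    LinearMap.range (G.lapMatrix ℝ).mulVecLin = LinearMap.ker (dotProductEquiv ℝ V fun _ => 1) := by
  have := hG.nonempty
  refine Submodule.eq_of_le_of_finrank_eq G.range_lapMatrix_le_ker_dotProductEquiv_one ?_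
  have hone : dotProductEquiv ℝ V (fun _ => 1) ≠ 0 :=
    (LinearEquiv.map_ne_zero_iff _).mpr (Function.ne_iff.mpr ⟨Classical.arbitrary V, one_ne_zero⟩)
  have := Module.Dual.finrank_ker_add_one_of_ne_zero hone
  rw [Module.finrank_fintype_fun_eq_card, ← hG.finrank_range_lapMatrix] at this
  omega

theorem range_lapMatrix_le_of_connected (G : SimpleGraph V) [DecidableRel G.Adj]
    {T : SimpleGraph V} [DecidableRel T.Adj] (hT : T.Connected) :
    LinearMap.range (G.lapMatrix ℝ).mulVecLin ≤ LinearMap.range (T.lapMatrix ℝ).mulVecLin :=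
  hT.range_lapMatrix ▸ G.range_lapMatrix_le_ker_dotProductEquiv_one

end SimpleGraph

theorem lagrange_multiplier_transfer_to_tree_general
    {V E E_T : Type*} [Fintype V] [Fintype E] [Fintype E_T]
    [DecidableEq V]
    (G : SimpleGraph V) [DecidableRel G.Adj]
    (T : SimpleGraph V) [DecidableRel T.Adj] (hT : T.Connected)
    (D : Matrix V E ℝ) (hD : D * Dᵀ = G.lapMatrix ℝ)
    (D_T : Matrix V E_T ℝ) (hDT : D_T * D_Tᵀ = T.lapMatrix ℝ) :
    ∀ lam : E → ℝ, ∃ lamT : E_T → ℝ, D *ᵥ lam = D_T *ᵥ lamT := by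
  intro lam
  have hmem : D *ᵥ lam ∈ LinearMap.range D_T.mulVecLin := by
    rw [← range_mulVecLin_mul_transpose_self, hDT]
    apply G.range_lapMatrix_le_of_connected hT
    rw [← hD, range_mulVecLin_mul_transpose_self]
    exact LinearMap.mem_range_self D.mulVecLin lam
  obtain ⟨lamT, hlamT⟩ := hmem
  exact ⟨lamT, hlamT.symm⟩

/-- Transfer of Lagrange multipliers to a spanning tree: for
connected simple graphs `G` and `T` on the same vertex type with
`D * Dᵀ = G.lapMatrix ℝ` and `D_T * D_Tᵀ = T.lapMatrix ℝ`, for every `λ : E → ℝ`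
there exists `λ_T : E_T → ℝ` with `D *ᵥ λ = D_T *ᵥ λ_T`; i.e. the column space of
`D` is contained in the column space of `D_T` (in fact they coincide). -/
theorem lagrange_multiplier_transfer_to_tree
    {V E E_T : Type*} [Fintype V] [Fintype E] [Fintype E_T]
    [Nonempty V] [Nonempty E] [Nonempty E_T] [DecidableEq V]
    (G : SimpleGraph V) [DecidableRel G.Adj] (hG : G.Connected)
    (T : SimpleGraph V) [DecidableRel T.Adj] (hT : T.Connected)
    (D : Matrix V E ℝ) (hD : D * Dᵀ = G.lapMatrix ℝ)
    (D_T : Matrix V E_T ℝ) (hDT : D_T * D_Tᵀ = T.lapMatrix ℝ) :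
    ∀ lam : E → ℝ, ∃ lamT : E_T → ℝ, D *ᵥ lam = D_T *ᵥ lamT :=
  lagrange_multiplier_transfer_to_tree_general G T hT D hD D_T hDT
end
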